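/- Let α ∈ NC_n and β, γ ∈ NC_{n'} be noncrossing matchings such that β ↗_i γ for some 2 ≤ i ≤ 2n'−2. Then, for the Temperley–Lieb operator e_{2n+i} acting on NC_{n+n'}, the preimage of the concatenation αβ is e_{2n+i}^{−1}(αβ) = { ασ : σ ∈ NC_{n'} with e_i(σ) = β }. -/

import Mathlib

attribute [local instance] Classical.propDecidable

open MvPolynomial

/-! ### Noncrossing matchings -/

/-- `f` encodes a noncrossing perfect matching of the points `0, …, 2n-1`
(point `p` of the paper, which is 1-indexed, corresponds to index `p-1`):
`f` is a fixed-point-free involution and no two arches cross. -/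
def IsNCMatching (n : ℕ) (f : Fin (2*n) → Fin (2*n)) : Prop :=
  (∀ i, f (f i) = i) ∧ (∀ i, f i ≠ i) ∧
    ∀ i j : Fin (2*n), i < j → j < f i → f i < f j → False

/-- The type of noncrossing matchings of size `n`. -/
def NCM (n : ℕ) := {f : Fin (2*n) → Fin (2*n) // IsNCMatching n f}

noncomputable instance (n : ℕ) : Fintype (NCM n) := by
  unfold NCM; exact Fintype.ofFinite _

/-- The noncrossing matching `()_n` consisting of `n` nested arches. -/
def nestedNC (n : ℕ) : NCM n :=
  ⟨fun i => ⟨2*n - 1 - i.val, by have := i.isLt; omega⟩, by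
    refine ⟨fun i => ?_, fun i => ?_, fun i j h1 h2 h3 => ?_⟩
    · have := i.isLt
      apply Fin.ext
      show 2*n - 1 - (2*n - 1 - i.val) = i.val
      omega
    · have := i.isLt
      intro h
      have h' : 2*n - 1 - i.val = i.val := congrArg Fin.val h
      omega
    · have hi := i.isLt; have hj := j.isLt
      rw [Fin.lt_def] at h1 h2 h3
      have e2 : j.val < 2*n - 1 - i.val := h2
      have e3 : 2*n - 1 - i.val < 2*n - 1 - j.val := h3
      omega⟩

/-- The Temperley–Lieb operator `e_j` (with `j` the 1-indexed label of the paper,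
acting on points `j`, `j+1`, cyclically identifying `2n+1` with `1`;
point `p` corresponds to index `p-1`). -/
def TLe (m : ℕ) (j : ℕ) (f : Fin m → Fin m) : Fin m → Fin m :=
  fun i =>
    let a : Fin m := ⟨(j - 1) % m, Nat.mod_lt _ i.pos⟩
    let b : Fin m := ⟨j % m, Nat.mod_lt _ i.pos⟩
    if i = a then b else if i = b then a
    else if f i = a then f b else if f i = b then f a else f i

/-- Concatenation `σπ` of two matchings (as functions on points). -/
def concatF (n n' : ℕ) (f : Fin (2*n) → Fin (2*n)) (g : Fin (2*n') → Fin (2*n')) :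
    Fin (2*(n+n')) → Fin (2*(n+n')) := fun i =>
  if h : i.val < 2*n then
    ⟨(f ⟨i.val, h⟩).val, by have := (f ⟨i.val, h⟩).isLt; omega⟩
  else
    ⟨2*n + (g ⟨i.val - 2*n, by have := i.isLt; omega⟩).val,
      by have := (g ⟨i.val - 2*n, by have := i.isLt; omega⟩).isLt; omega⟩

/-- `(π)_m`: the matching `π` (of size `n`) surrounded by `m` nested arches. -/
def nestF (n m : ℕ) (f : Fin (2*n) → Fin (2*n)) :
    Fin (2*(n+m)) → Fin (2*(n+m)) := fun i =>
  if h : i.val < m ∨ 2*n + m ≤ i.val then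
    ⟨2*(n+m) - 1 - i.val, by have := i.isLt; omega⟩
  else
    ⟨m + (f ⟨i.val - m, by have := i.isLt; omega⟩).val,
      by have := (f ⟨i.val - m, by have := i.isLt; omega⟩).isLt; omega⟩

/-- Rotation `ρ` : `i` and `j` are matched in `ρ(π)` iff `i-1` and `j-1` are matched in `π`. -/
def rotF (m : ℕ) (f : Fin m → Fin m) : Fin m → Fin m := fun i =>
  ⟨((f ⟨(i.val + (m - 1)) % m, Nat.mod_lt _ i.pos⟩).val + 1) % m, Nat.mod_lt _ i.pos⟩

/-- The length of the `i`-th row (0-indexed, from the top) of the Young diagram `λ(π)`: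
if `v_0 < … < v_{n-1}` are the (0-indexed) positions of the left endpoints of the arches,
then the `i`-th row from the top has `v_{n-1-i} - (n-1-i)` boxes. -/
noncomputable def lamRowF (n : ℕ) (f : Fin (2*n) → Fin (2*n)) (i : ℕ) : ℕ :=
  if i < n then
    (((Finset.univ.filter fun j : Fin (2*n) => j < f j).sort (· ≤ ·)).map Fin.val).getD
        (n - 1 - i) 0 - (n - 1 - i)
  else 0

/-- `|λ(π)|`, the number of boxes of the Young diagram of `π`. -/
noncomputable def numBoxes (n : ℕ) (f : Fin (2*n) → Fin (2*n)) : ℕ :=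
  ∑ i ∈ Finset.range n, lamRowF n f i

/-- `σ ≤ π`, i.e. `λ(σ)` is contained in `λ(π)`. -/
noncomputable def LamLe (n : ℕ) (f g : Fin (2*n) → Fin (2*n)) : Prop :=
  ∀ i, lamRowF n f i ≤ lamRowF n g i

/-- `σ < π`, i.e. `λ(σ)` is strictly contained in `λ(π)`. -/
noncomputable def LamLt (n : ℕ) (f g : Fin (2*n) → Fin (2*n)) : Prop :=
  LamLe n f g ∧ ∃ i, lamRowF n f i < lamRowF n g i

/-- `σ ↗_j π` : `λ(π)` is obtained from `λ(σ)` by adding one box on the `j`-th diagonal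
(the box in 0-indexed row `r` and 0-indexed column `c` lies on diagonal `n + c - r`,
matching the paper's 1-indexed `n + c - i`). -/
noncomputable def UpArrow (n : ℕ) (f g : Fin (2*n) → Fin (2*n)) (j : ℕ) : Prop :=
  ∃ r, r < n ∧ lamRowF n g r = lamRowF n f r + 1 ∧
    (∀ i, i ≠ r → lamRowF n g i = lamRowF n f i) ∧
    n + lamRowF n f r - r = j

/-- The number of boxes of `λ(π)` lying on the `d`-th diagonal. -/
noncomputable def boxesOnDiag (n : ℕ) (f : Fin (2*n) → Fin (2*n)) (d : ℕ) : ℕ :=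
  ((Finset.range n ×ˢ Finset.range n).filter
    (fun rc => rc.2 < lamRowF n f rc.1 ∧ n + rc.2 - rc.1 = d)).card

/-- The cells `(row, column)` (0-indexed) of the Young diagram `λ(π)`. -/
noncomputable def cellsF (n : ℕ) (f : Fin (2*n) → Fin (2*n)) : Finset (ℕ × ℕ) :=
  (Finset.range n ×ˢ Finset.range n).filter fun rc => rc.2 < lamRowF n f rc.1

/-- `f_{λ(π)}`: the number of standard Young tableaux of shape `λ(π)`, i.e. of
bijective fillings of the cells with `0, …, |λ|-1` strictly increasing along
rows and down columns. -/
noncomputable def numSYT (n : ℕ) (f : Fin (2*n) → Fin (2*n)) : ℕ :=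
  Nat.card {T : {c : ℕ × ℕ // c ∈ cellsF n f} ≃ Fin (cellsF n f).card //
    (∀ a b : {c : ℕ × ℕ // c ∈ cellsF n f}, a.1.1 = b.1.1 → a.1.2 < b.1.2 → T a < T b) ∧
    (∀ a b : {c : ℕ × ℕ // c ∈ cellsF n f}, a.1.2 = b.1.2 → a.1.1 < b.1.1 → T a < T b)}

/-! ### Fully packed loops -/

/-- The vertices relevant for an FPL of size `n`: the `n × n` grid vertices
(`(column, row)`, 0-indexed, row 0 at the top) together with the `4n` external
edge endpoints, indexed counterclockwise starting with the topmost on the left side. -/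
def FVert (n : ℕ) := (Fin n × Fin n) ⊕ (Fin (4*n))

/-- The grid vertex to which the `t`-th external edge is attached
(`t` counted counterclockwise: down the left side, then along the bottom,
up the right side, and along the top). -/
def extVert {n : ℕ} (t : Fin (4*n)) : Fin n × Fin n :=
  if h1 : t.val < n then (⟨0, by omega⟩, ⟨t.val, h1⟩)
  else if h2 : t.val < 2*n then (⟨t.val - n, by omega⟩, ⟨n - 1, by omega⟩)
  else if h3 : t.val < 3*n then (⟨n - 1, by omega⟩, ⟨n - 1 - (t.val - 2*n), by omega⟩)
  else (⟨n - 1 - (t.val - 3*n), by have := t.isLt; omega⟩, ⟨0, by have := t.isLt; omega⟩)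

/-- Adjacency in the `n × n` grid graph. -/
def gridAdj {n : ℕ} (u v : Fin n × Fin n) : Prop :=
  (u.1 = v.1 ∧ (u.2.val + 1 = v.2.val ∨ v.2.val + 1 = u.2.val)) ∨
  (u.2 = v.2 ∧ (u.1.val + 1 = v.1.val ∨ v.1.val + 1 = u.1.val))

/-- Adjacency in the `n × n` grid together with all `4n` external edges. -/
def fullAdj {n : ℕ} : FVert n → FVert n → Prop
  | Sum.inl u, Sum.inl v => gridAdj u v
  | Sum.inl u, Sum.inr t => u = extVert t
  | Sum.inr t, Sum.inl u => u = extVert t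
  | Sum.inr _, Sum.inr _ => False

/-- A fully packed loop configuration of size `n`: a subgraph of the grid with
external edges in which every grid vertex has degree `2` and which contains
exactly every other external edge, beginning with the topmost at the left side. -/
structure FPL (n : ℕ) where
  adj : FVert n → FVert n → Prop
  symm : ∀ u v, adj u v → adj v u
  sub : ∀ u v, adj u v → fullAdj u v
  degGrid : ∀ u : Fin n × Fin n, {v | adj (Sum.inl u) v}.ncard = 2
  degExtEven : ∀ t : Fin (4*n), t.val % 2 = 0 → {v | adj (Sum.inr t) v}.ncard = 1
  degExtOdd : ∀ t : Fin (4*n), t.val % 2 = 1 → {v | adj (Sum.inr t) v}.ncard = 0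

/-- `F` has link pattern `f` : the chosen external edges, numbered counterclockwise by
`Fin (2n)` (the `k`-th chosen one being the external edge at boundary position `2k`),
are matched in pairs by `f` according to connectivity in `F`. -/
def hasLinkPattern {n : ℕ} (F : FPL n) (f : Fin (2*n) → Fin (2*n)) : Prop :=
  ∀ k l : Fin (2*n), f k = l ↔ (k ≠ l ∧
    Relation.ReflTransGen F.adj
      (Sum.inr ⟨2*k.val, by have := k.isLt; omega⟩)
      (Sum.inr ⟨2*l.val, by have := l.isLt; omega⟩))

/-- `A_π`: the number of FPLs of size `n` with link pattern `π`. -/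
noncomputable def countFPL (n : ℕ) (f : Fin (2*n) → Fin (2*n)) : ℕ :=
  Nat.card {F : FPL n // hasLinkPattern F f}

/-! ### Wheel polynomials and the operators `S_k`, `D_k` -/

/-- The cyclic successor `k+1` on `Fin m`. -/
def cycS {m : ℕ} (i : Fin m) : Fin m := ⟨(i.val + 1) % m, Nat.mod_lt _ i.pos⟩

/-- `S_k`: the algebra automorphism exchanging the variables `z_k` and `z_{k+1}`
(cyclically, `z_{2n+1} := z_1`). -/
noncomputable def swapVar {F : Type*} [CommSemiring F] {N : ℕ} (k : Fin N)
    (f : MvPolynomial (Fin N) F) : MvPolynomial (Fin N) F :=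
  MvPolynomial.rename (Equiv.swap k (cycS k)) f

/-- `D` is the operator `D_k : f ↦ ((q z_k - q⁻¹ z_{k+1})/(z_{k+1} - z_k))·(S_k f - f)`,
characterized by `(z_{k+1} - z_k) · D f = (q z_k - q⁻¹ z_{k+1}) · (S_k f - f)`. -/
def IsDOp {F : Type*} [Field F] {N : ℕ} (q : F) (k : Fin N)
    (D : MvPolynomial (Fin N) F → MvPolynomial (Fin N) F) : Prop :=
  ∀ f, (X (cycS k) - X k) * D f = (C q * X k - C q⁻¹ * X (cycS k)) * (swapVar k f - f)

/-- A wheel polynomial of order `n`: homogeneous of degree `n(n-1)` and vanishing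
under every substitution `z_j := q² z_i`, `z_k := q⁴ z_i` with `i < j < k`. -/
def IsWheel {F : Type*} [Field F] (q : F) (n : ℕ) (p : MvPolynomial (Fin (2*n)) F) : Prop :=
  p.IsHomogeneous (n*(n-1)) ∧
  ∀ i j k : Fin (2*n), i < j → j < k →
    (MvPolynomial.aeval (fun t : Fin (2*n) =>
      if t = j then C (q^2) * X i else if t = k then C (q^4) * X i else X t)) p = 0

/-- The vector space `W_n[z]` of wheel polynomials of order `n`, as a submodule. -/
noncomputable def wheelSpace (F : Type*) [Field F] (q : F) (n : ℕ) :
    Submodule F (MvPolynomial (Fin (2*n)) F) :=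
  (homogeneousSubmodule (Fin (2*n)) F (n*(n-1))) ⊓
  ⨅ (i : Fin (2*n)) (j : Fin (2*n)) (k : Fin (2*n)) (_ : i < j) (_ : j < k),
    LinearMap.ker (MvPolynomial.aeval (R := F) (fun t : Fin (2*n) =>
      if t = j then C (q^2) * X i else if t = k then C (q^4) * X i else X t)).toLinearMap

/-- `Ψ_{()_n} = (q - q⁻¹)^{-n(n-1)} ∏_{1 ≤ i < j ≤ n} (q z_i - q⁻¹ z_j)(q z_{n+i} - q⁻¹ z_{n+j})`. -/
noncomputable def PsiEmpty {F : Type*} [Field F] (q : F) (n : ℕ) :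
    MvPolynomial (Fin (2*n)) F :=
  C (((q - q⁻¹)^(n*(n-1)))⁻¹) *
    ∏ ij ∈ Finset.univ.filter (fun ij : Fin n × Fin n => ij.1 < ij.2),
      ((C q * X ⟨ij.1.val, by have := ij.1.isLt; omega⟩ -
        C q⁻¹ * X ⟨ij.2.val, by have := ij.2.isLt; omega⟩) *
       (C q * X ⟨n + ij.1.val, by have := ij.1.isLt; omega⟩ -
        C q⁻¹ * X ⟨n + ij.2.val, by have := ij.2.isLt; omega⟩))

/-- The `Fin (2n)`-index of the operator `D_j` for the paper's (1-indexed, cyclic,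
`D_{j+2n} = D_j`) index `j`. -/
def finOfIdx (N : ℕ) (hN : 0 < N) (j : ℕ) : Fin N := ⟨(j - 1) % N, Nat.mod_lt _ hN⟩

/-- The list of `D`-operator indices for `D_π`: for each box of `λ(π)`, read row by row
from top to bottom and left to right within each row, the (0-indexed) index of the
diagonal `n + c - i` of that box. -/
def diagList1 (n : ℕ) (lam : ℕ → ℕ) : List (Fin (2*n)) :=
  (List.finRange n).flatMap fun i =>
    (List.range (lam i.val)).map fun c =>
      ⟨(n - 1 + c - i.val) % (2*n), Nat.mod_lt _ (by have := i.isLt; omega)⟩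

/-- The wheel polynomial `D_π`, obtained from `Ψ_{()_n}` by successively applying,
for each box of `λ(π)` read row by row from top to bottom and left to right,
the operator `D` indexed by the diagonal of that box. -/
noncomputable def DpiF {F : Type*} [Field F] (q : F) (n : ℕ)
    (D : Fin (2*n) → MvPolynomial (Fin (2*n)) F → MvPolynomial (Fin (2*n)) F)
    (f : Fin (2*n) → Fin (2*n)) : MvPolynomial (Fin (2*n)) F :=
  (diagList1 n (lamRowF n f)).foldl (fun p k => D k p) (PsiEmpty q n)

/-- Operator indices for the second stage of `D_{π₁,π₂}`: for each box of `λ(π₂)`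
(in reading order) the index of `D_{c-i}` (paper 1-indexed diagonal `c - i`, taken
mod `2n`). -/
def diagList2 (n rows : ℕ) (h : rows ≤ n) (lam : ℕ → ℕ) : List (Fin (2*n)) :=
  (List.finRange rows).flatMap fun i =>
    (List.range (lam i.val)).map fun c =>
      ⟨(((c : ℤ) - (i.val : ℤ) - 1) % ((2*n : ℕ) : ℤ)).toNat, by
        have hi := i.isLt
        have h2 : (0:ℤ) < ((2*n : ℕ) : ℤ) := by exact_mod_cast (show (0:ℕ) < 2*n by omega)
        have h3 := Int.emod_nonneg ((c : ℤ) - (i.val : ℤ) - 1) (ne_of_gt h2)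
        have h4 := Int.emod_lt_of_pos ((c : ℤ) - (i.val : ℤ) - 1) h2
        omega⟩

/-- The wheel polynomial `D_{π₁,π₂}` (with `π₁` of size `n₁`, `π₂` of size `n₂`):
starting from `D_{(π₁)_{n₂}}`, apply for each box of `λ(π₂)`, read row by row from top
to bottom and left to right, the operator `D` indexed (cyclically) by `c - i`. -/
noncomputable def DpiPair {F : Type*} [Field F] (q : F) (n1 n2 : ℕ)
    (D : Fin (2*(n1+n2)) → MvPolynomial (Fin (2*(n1+n2))) F → MvPolynomial (Fin (2*(n1+n2))) F)
    (f1 : Fin (2*n1) → Fin (2*n1)) (f2 : Fin (2*n2) → Fin (2*n2)) :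
    MvPolynomial (Fin (2*(n1+n2))) F :=
  (diagList2 (n1+n2) n2 (by omega) (lamRowF n2 f2)).foldl (fun p k => D k p)
    (DpiF q (n1+n2) D (nestF n1 n2 f1))

/-- `Psi` is the family `(Ψ_π)_{π ∈ NC_n}`: it starts with `Ψ_{()_n}` and satisfies the
recursion `Ψ_π = D_j(Ψ_σ) - Σ_{τ ∈ e_j⁻¹(σ), τ ∉ {σ,π}} Ψ_τ` whenever `σ ↗_j π`. -/
noncomputable def IsPsiFamily {F : Type*} [Field F] (q : F) (n : ℕ)
    (D : Fin (2*n) → MvPolynomial (Fin (2*n)) F → MvPolynomial (Fin (2*n)) F)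
    (Psi : NCM n → MvPolynomial (Fin (2*n)) F) : Prop :=
  Psi (nestedNC n) = PsiEmpty q n ∧
  ∀ (hn : 0 < n) (j : ℕ) (σ π : NCM n), UpArrow n σ.1 π.1 j →
    Psi π = D (finOfIdx (2*n) (by omega) j) (Psi σ) -
      ∑ τ : NCM n, if TLe (2*n) j τ.1 = σ.1 ∧ τ ≠ σ ∧ τ ≠ π then Psi τ else 0

/-! ### The polynomials `f(i,j)`, `g(i)`, `h(i)` and `P(α|β|γ)` -/

noncomputable def fP {F : Type*} [Field F] (q : F) {N : ℕ} (i j : Fin N) :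
    MvPolynomial (Fin N) F :=
  C (q - q⁻¹)⁻¹ * (C q * X i - C q⁻¹ * X j)

noncomputable def gP {F : Type*} [Field F] (q : F) {N : ℕ} (i : Fin N) :
    MvPolynomial (Fin N) F :=
  C (q - q⁻¹)⁻¹ * (C q - C q⁻¹ * X i)

noncomputable def hP {F : Type*} [Field F] (q : F) {N : ℕ} (i : Fin N) :
    MvPolynomial (Fin N) F :=
  C (q - q⁻¹)⁻¹ * (C q * X i - C q⁻¹)

noncomputable def Pabg {F : Type*} [Field F] (q : F) (n : ℕ)
    (α : Fin (2*n) → Fin (2*n) → ℕ) (β γ : Fin (2*n) → ℕ) :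
    MvPolynomial (Fin (2*n)) F :=
  (∏ i : Fin (2*n), ∏ j : Fin (2*n), if i ≠ j then fP q i j ^ α i j else 1) *
  ∏ i : Fin (2*n), (gP q i ^ β i * hP q i ^ γ i)

/-- The indeterminate `q` of `ℚ(q)`. -/
noncomputable def qQ : RatFunc ℚ := RatFunc.X

/-- `q = e^{2πi/3} ∈ ℂ`. -/
noncomputable def qC : ℂ := Complex.exp (2 * (Real.pi : ℂ) * Complex.I / 3)

/-!
Write `a < b` for the points joined by `e_{2n+i}` (both in the second block) and `σ` for a
preimage of `αβ`. All arches of `σ` away from `a, b` are arches of `αβ`. If the partner of `a`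
lay in the first block, every point of the second block before `a` would sit under that arch, so
the first `i - 1` points of `β` would be matched among themselves: the Dyck path of `β` returns
to height `0` just before its peak at `i`, and turning that peak into a valley, which is what
adding a box on diagonal `i` does, would make it negative. Hence `σ` preserves both blocks,
`σ = ατ`, and `e_{2n+i}(ατ) = α e_i(τ)` identifies `e_i(τ)` with `β`.
-/

open Finset

section LeftEnds

variable {m : ℕ} (f : Fin m → Fin m)

def leftEnds : Finset (Fin m) := univ.filter fun x => x < f x

def rightEnds : Finset (Fin m) := univ.filter fun x => f x < x

variable {f}

lemma card_leftEnds_filter_add (hfix : ∀ x, f x ≠ x) {p : ℕ} (hp : p ≤ m) :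
    #{x ∈ leftEnds f | x.val < p} + #{x ∈ rightEnds f | x.val < p} = p := by
  have hsplit := card_filter_add_card_filter_not (s := {x : Fin m | x.val < p})
    (p := fun x => x < f x)
  rw [Fin.card_filter_val_lt, min_eq_right hp] at hsplit
  convert hsplit using 3 <;> ext x <;>
    simp only [leftEnds, rightEnds, mem_filter, mem_univ, true_and]
  · tauto
  · rw [and_comm]
    exact and_congr_right fun _ => ⟨fun h => h.not_gt, fun h => (not_lt.1 h).lt_of_ne (hfix x)⟩

lemma card_rightEnds_filter_le_card_leftEnds_filter (hinv : Function.Involutive f) (p : ℕ) :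
    #{x ∈ rightEnds f | x.val < p} ≤ #{x ∈ leftEnds f | x.val < p} := by
  refine card_le_card_of_injOn f (fun x hx => ?_) hinv.injective.injOn
  simp only [leftEnds, rightEnds, coe_filter, mem_filter, mem_univ, true_and,
    Set.mem_ofPred_eq] at hx ⊢
  rw [hinv x]
  exact ⟨hx.1, lt_trans (Fin.lt_def.1 hx.1) hx.2⟩

lemma card_leftEnds_filter_le_card_rightEnds_filter (hinv : Function.Involutive f) {p : ℕ}
    (hcl : ∀ x : Fin m, x.val < p → (f x).val < p) :
    #{x ∈ leftEnds f | x.val < p} ≤ #{x ∈ rightEnds f | x.val < p} := by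
  refine card_le_card_of_injOn f (fun x hx => ?_) hinv.injective.injOn
  simp only [leftEnds, rightEnds, coe_filter, mem_filter, mem_univ, true_and,
    Set.mem_ofPred_eq] at hx ⊢
  rw [hinv x]
  exact ⟨hx.1, hcl x hx.2⟩

lemma le_two_mul_card_leftEnds_filter (hinv : Function.Involutive f) (hfix : ∀ x, f x ≠ x)
    {p : ℕ} (hp : p ≤ m) : p ≤ 2 * #{x ∈ leftEnds f | x.val < p} := by
  have := card_leftEnds_filter_add hfix hp
  have := card_rightEnds_filter_le_card_leftEnds_filter hinv p
  omega

lemma two_mul_card_leftEnds_filter (hinv : Function.Involutive f) (hfix : ∀ x, f x ≠ x)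
    {p : ℕ} (hp : p ≤ m) (hcl : ∀ x : Fin m, x.val < p → (f x).val < p) :
    2 * #{x ∈ leftEnds f | x.val < p} = p := by
  have := card_leftEnds_filter_add hfix hp
  have := card_rightEnds_filter_le_card_leftEnds_filter hinv p
  have := card_leftEnds_filter_le_card_rightEnds_filter hinv hcl
  omega

lemma card_leftEnds {n : ℕ} {f : Fin (2 * n) → Fin (2 * n)} (hinv : Function.Involutive f)
    (hfix : ∀ x, f x ≠ x) : #(leftEnds f) = n := by
  have h := two_mul_card_leftEnds_filter hinv hfix le_rfl fun x _ => (f x).isLt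
  rw [filter_true_of_mem fun x _ => x.isLt] at h
  omega

end LeftEnds

lemma card_filter_lt_orderEmbOfFin {α : Type*} [LinearOrder α] (s : Finset α) {k : ℕ}
    (h : #s = k) (t : Fin k) : #{x ∈ s | x < s.orderEmbOfFin h t} = t := by
  have : {x ∈ s | x < s.orderEmbOfFin h t} = (Iio t).map (s.orderEmbOfFin h).toEmbedding := by
    ext x
    simp only [mem_filter, mem_map, mem_Iio, RelEmbedding.coe_toEmbedding]
    constructor
    · rintro ⟨hx, hlt⟩
      obtain ⟨u, rfl⟩ : x ∈ Set.range (s.orderEmbOfFin h) := by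
        rwa [range_orderEmbOfFin]
      exact ⟨u, (s.orderEmbOfFin h).lt_iff_lt.1 hlt, rfl⟩
    · rintro ⟨u, hu, rfl⟩
      exact ⟨orderEmbOfFin_mem s h u, (s.orderEmbOfFin h).lt_iff_lt.2 hu⟩
  rw [this, card_map, Fin.card_Iio]

lemma val_le_orderEmbOfFin {m k : ℕ} (s : Finset (Fin m)) (h : #s = k) (t : Fin k) :
    t.val ≤ s.orderEmbOfFin h t := by
  calc t.val = #{x ∈ s | x < s.orderEmbOfFin h t} := by
        convert (card_filter_lt_orderEmbOfFin s h t).symm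
    _ ≤ #(Iio (s.orderEmbOfFin h t)) :=
        card_le_card fun x hx => by simpa using (mem_filter.1 hx).2
    _ = s.orderEmbOfFin h t := Fin.card_Iio _

lemma lamRowF_eq {n : ℕ} {f : Fin (2 * n) → Fin (2 * n)} (hinv : Function.Involutive f)
    (hfix : ∀ x, f x ≠ x) {r : ℕ} (hr : r < n) :
    lamRowF n f r =
      ((leftEnds f).orderEmbOfFin (card_leftEnds hinv hfix) ⟨n - 1 - r, by omega⟩).val
        - (n - 1 - r) := by
  rw [lamRowF, if_pos hr, orderEmbOfFin_apply, List.getD_eq_getElem, List.getElem_map]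
  · rfl
  · simpa [length_sort] using (card_leftEnds hinv hfix).symm ▸ (by omega : n - 1 - r < n)

/-- Write `s = n - 1 - r` for the row `r` that receives the box. The box forces the `s`-th left
end of `β` to be `i - 1` and that of `γ` to be `i`, so both have exactly `s` left ends before
those points. A closed prefix of length `i - 1` then gives `2 s = i - 1`, while the ballot
condition for `γ` at `i` gives `i ≤ 2 s`. -/
lemma not_upArrow_of_prefix_closed {n i : ℕ} {β γ : Fin (2 * n) → Fin (2 * n)}
    (hβ : Function.Involutive β) (hβ' : ∀ x, β x ≠ x)
    (hγ : Function.Involutive γ) (hγ' : ∀ x, γ x ≠ x)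
    (hcl : ∀ y : Fin (2 * n), y.val < i - 1 → (β y).val < i - 1) : ¬ UpArrow n β γ i := by
  rintro ⟨r, hr, hrow, -, hdiag⟩
  rw [lamRowF_eq hβ hβ' hr] at hrow hdiag
  rw [lamRowF_eq hγ hγ' hr] at hrow
  generalize hs : (⟨n - 1 - r, _⟩ : Fin n) = s at hrow hdiag
  have hsr : s.val = n - 1 - r := by rw [← hs]
  have hcountβ := card_filter_lt_orderEmbOfFin (leftEnds β) (card_leftEnds hβ hβ') s
  have hcountγ := card_filter_lt_orderEmbOfFin (leftEnds γ) (card_leftEnds hγ hγ') s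
  have hsβ := val_le_orderEmbOfFin (leftEnds β) (card_leftEnds hβ hβ') s
  have hsγ := val_le_orderEmbOfFin (leftEnds γ) (card_leftEnds hγ hγ') s
  generalize (leftEnds β).orderEmbOfFin (card_leftEnds hβ hβ') s = vβ at *
  generalize (leftEnds γ).orderEmbOfFin (card_leftEnds hγ hγ') s = vγ at *
  have hvβ : vβ.val = i - 1 := by omega
  have hvγ : vγ.val = i := by omega
  have hclosed := two_mul_card_leftEnds_filter hβ hβ' (p := i - 1) (by omega) hcl
  have hballot := le_two_mul_card_leftEnds_filter hγ hγ' (p := i) (by omega)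
  simp only [Fin.lt_def, hvβ, hvγ] at hcountβ hcountγ
  omega

section TemperleyLieb

variable {m : ℕ}

/-- `TLe m j` with its two (0-indexed) points `j - 1, j` given directly as `a, b`. -/
def tlAt (a b : Fin m) (f : Fin m → Fin m) : Fin m → Fin m := fun x =>
  if x = a then b else if x = b then a
  else if f x = a then f b else if f x = b then f a else f x

lemma TLe_eq_tlAt {j : ℕ} (hj : 1 ≤ j) (hjm : j < m) (f : Fin m → Fin m) :
    TLe m j f = tlAt ⟨j - 1, by omega⟩ ⟨j, hjm⟩ f := by
  have ha : (j - 1) % m = j - 1 := Nat.mod_eq_of_lt (by omega)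
  have hb : j % m = j := Nat.mod_eq_of_lt hjm
  funext x
  simp only [TLe, tlAt, ha, hb]

variable {a b : Fin m} {f : Fin m → Fin m}

lemma tlAt_apply_of_ne {x : Fin m} (hxa : x ≠ a) (hxb : x ≠ b) (hfa : f x ≠ a)
    (hfb : f x ≠ b) :
    tlAt a b f x = f x := by
  simp only [tlAt, hxa, hxb, hfa, hfb, if_false]

lemma tlAt_apply_apply_left (hinv : f (f a) = a) (hfa : f a ≠ a) (hfb : f a ≠ b) :
    tlAt a b f (f a) = f b := by
  simp only [tlAt, hfa, hfb, hinv, if_false, if_true]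

lemma mapsTo_of_mapsTo_tlAt {R : Set (Fin m)} (hinv : f (f a) = a) (hfix : f a ≠ a)
    (ha : a ∈ R) (hb : b ∈ R) (hfaR : f a ∈ R) (h : Set.MapsTo (tlAt a b f) R R) :
    Set.MapsTo f R R := by
  intro x hx
  by_cases hxa : x = a
  · exact hxa ▸ hfaR
  by_cases hfxa : f x = a
  · exact hfxa ▸ ha
  by_cases hfxb : f x = b
  · exact hfxb ▸ hb
  by_cases hxb : x = b
  · subst hxb
    by_cases hab : f a = x
    · rwa [← hab, hinv]
    · simpa only [tlAt_apply_apply_left hinv hfix hab] using h hfaR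
  · simpa only [tlAt_apply_of_ne hxa hxb hfxa hfxb] using h hx

end TemperleyLieb

section Concat

variable {n n' : ℕ}

def concatLeft (n' : ℕ) (x : Fin (2 * n)) : Fin (2 * (n + n')) := ⟨x, by omega⟩

def concatRight (n : ℕ) (y : Fin (2 * n')) : Fin (2 * (n + n')) := ⟨2 * n + y, by omega⟩

lemma concatLeft_or_concatRight (x : Fin (2 * (n + n'))) :
    (∃ y, x = concatLeft n' y) ∨ ∃ y, x = concatRight n y := by
  by_cases hx : x.val < 2 * n
  · exact .inl ⟨⟨x, hx⟩, rfl⟩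
  · exact .inr ⟨⟨x - 2 * n, by omega⟩, Fin.ext (by simp only [concatRight]; omega)⟩

lemma concatRight_strictMono : StrictMono (concatRight (n' := n') n) :=
  fun _ _ h => Fin.mk_lt_mk.2 (by simpa using h)

lemma concatLeft_lt_concatRight (x : Fin (2 * n)) (y : Fin (2 * n')) :
    concatLeft n' x < concatRight n y :=
  Fin.mk_lt_mk.2 (by omega)

lemma concatLeft_ne_concatRight (x : Fin (2 * n)) (y : Fin (2 * n')) :
    concatLeft n' x ≠ concatRight n y :=
  (concatLeft_lt_concatRight x y).ne

variable (f : Fin (2 * n) → Fin (2 * n)) (g : Fin (2 * n') → Fin (2 * n'))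

@[simp]
lemma concatF_concatLeft (x : Fin (2 * n)) :
    concatF n n' f g (concatLeft n' x) = concatLeft n' (f x) := by
  simp [concatF, concatLeft]

@[simp]
lemma concatF_concatRight (y : Fin (2 * n')) :
    concatF n n' f g (concatRight n y) = concatRight n (g y) := by
  simp [concatF, concatRight]

lemma concatF_right_injective : Function.Injective (concatF n n' f) := fun g g' h =>
  funext fun y => concatRight_strictMono.injective (by
    simpa only [concatF_concatRight] using congrFun h (concatRight n y))

lemma tlAt_concatF (a b : Fin (2 * n')) :
    tlAt (concatRight n a) (concatRight n b) (concatF n n' f g) =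
      concatF n n' f (tlAt a b g) := by
  funext x
  rcases concatLeft_or_concatRight x with ⟨x, rfl⟩ | ⟨y, rfl⟩
  · simp [tlAt, concatLeft_ne_concatRight]
  · simp only [tlAt, concatF_concatRight, concatRight_strictMono.injective.eq_iff]
    split_ifs <;> rfl

end Concat

namespace IsNCMatching

variable {n : ℕ} {f : Fin (2 * n) → Fin (2 * n)}

lemma apply_mem_Ioo (hf : IsNCMatching n f) {u x : Fin (2 * n)} (hux : f u < x)
    (hxu : x < u) : f u < f x ∧ f x < u := by
  obtain ⟨hinv, -, hnc⟩ := hf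
  have hfx_ne_fu : f x ≠ f u := fun h => hxu.ne (by rw [← hinv x, h, hinv])
  have hfx_ne_u : f x ≠ u := fun h => hux.ne' (by rw [← h, hinv])
  refine ⟨lt_of_not_ge fun hle => ?_, lt_of_not_ge fun hle => ?_⟩
  · exact hnc (f x) (f u) (hle.lt_of_ne hfx_ne_fu) (by rwa [hinv]) (by rwa [hinv, hinv])
  · exact hnc (f u) x hux (by rwa [hinv]) (by rw [hinv]; exact hle.lt_of_ne' hfx_ne_u)

lemma of_semiconj {k : ℕ} {g : Fin (2 * k) → Fin (2 * k)} {e : Fin (2 * k) → Fin (2 * n)}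
    (hf : IsNCMatching n f) (he : StrictMono e) (h : Function.Semiconj e g f) :
    IsNCMatching k g := by
  obtain ⟨hinv, hfix, hnc⟩ := hf
  refine ⟨fun y => he.injective ?_, fun y hy => hfix (e y) ?_,
    fun y z hyz hzy hgyz => hnc (e y) (e z) (he hyz) ?_ ?_⟩
  · rw [h, h, hinv]
  · rw [← h, hy]
  · rw [← h]; exact he hzy
  · rw [← h, ← h]; exact he hgyz

end IsNCMatching

section Preimage

variable {n n' i : ℕ} {α : Fin (2 * n) → Fin (2 * n)} {β γ : Fin (2 * n') → Fin (2 * n')}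
  {σ : Fin (2 * (n + n')) → Fin (2 * (n + n'))}

lemma TLe_two_mul_add (hi : 1 ≤ i) (hi' : i < 2 * n')
    (f : Fin (2 * (n + n')) → Fin (2 * (n + n'))) :
    TLe (2 * (n + n')) (2 * n + i) f =
      tlAt (concatRight n ⟨i - 1, by omega⟩) (concatRight n ⟨i, hi'⟩) f := by
  rw [TLe_eq_tlAt (by omega) (by omega)]
  congr 2
  exact (by omega : 2 * n + i - 1 = 2 * n + (i - 1))

lemma apply_mem_range_concatRight (hi : 1 ≤ i) (hi' : i < 2 * n')
    (hσ : IsNCMatching (n + n') σ) (hβ : IsNCMatching n' β) (hγ : IsNCMatching n' γ)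
    (hup : UpArrow n' β γ i)
    (h : tlAt (concatRight n ⟨i - 1, by omega⟩) (concatRight n ⟨i, hi'⟩) σ =
      concatF n n' α β) :
    σ (concatRight n ⟨i - 1, by omega⟩) ∈ Set.range (concatRight n) := by
  obtain ⟨p, hp⟩ | ⟨y, hy⟩ :=
    concatLeft_or_concatRight (σ (concatRight n ⟨i - 1, by omega⟩))
  swap
  · exact ⟨y, hy.symm⟩
  refine absurd hup (not_upArrow_of_prefix_closed hβ.1 hβ.2.1 hγ.1 hγ.2.1 fun y hy => ?_)
  have hab : concatRight n ⟨i - 1, by omega⟩ < concatRight n (⟨i, hi'⟩ : Fin (2 * n')) :=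
    concatRight_strictMono (Fin.mk_lt_mk.2 (by omega))
  have hlo := hp ▸ concatLeft_lt_concatRight p y
  have hhi : concatRight n y < concatRight n ⟨i - 1, by omega⟩ :=
    concatRight_strictMono (Fin.mk_lt_mk.2 hy)
  have hin := (hσ.apply_mem_Ioo hlo hhi).2
  have hfix := tlAt_apply_of_ne hhi.ne (hhi.trans hab).ne hin.ne (hin.trans hab).ne
  rw [h, concatF_concatRight] at hfix
  rw [← hfix] at hin
  exact concatRight_strictMono.lt_iff_lt.1 hin

lemma exists_eq_concatF_of_tlAt_eq (hi : 1 ≤ i) (hi' : i < 2 * n')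
    (hσ : IsNCMatching (n + n') σ) (hβ : IsNCMatching n' β) (hγ : IsNCMatching n' γ)
    (hup : UpArrow n' β γ i)
    (h : tlAt (concatRight n ⟨i - 1, by omega⟩) (concatRight n ⟨i, hi'⟩) σ =
      concatF n n' α β) :
    ∃ τ : NCM n', tlAt ⟨i - 1, by omega⟩ ⟨i, hi'⟩ τ.1 = β ∧
      σ = concatF n n' α τ.1 := by
  set R := Set.range (concatRight (n' := n') n)
  have hRR : Set.MapsTo σ R R := by
    refine mapsTo_of_mapsTo_tlAt (b := concatRight n ⟨i, hi'⟩) (hσ.1 _) (hσ.2.1 _)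
      ⟨_, rfl⟩ ⟨_, rfl⟩ (apply_mem_range_concatRight hi hi' hσ hβ hγ hup h) ?_
    rw [h]
    rintro _ ⟨y, rfl⟩
    exact ⟨β y, (concatF_concatRight α β y).symm⟩
  choose τ hτ using fun y => hRR ⟨y, rfl⟩
  have hleft (x : Fin (2 * n)) : σ (concatLeft n' x) = concatLeft n' (α x) := by
    have hnot : σ (concatLeft n' x) ∉ R := fun hR => by
      obtain ⟨y, hy⟩ := hRR hR
      exact concatLeft_ne_concatRight x y (by rw [hy, hσ.1])
    have hfix := tlAt_apply_of_ne (f := σ) (concatLeft_ne_concatRight x ⟨i - 1, by omega⟩)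
      (concatLeft_ne_concatRight x ⟨i, hi'⟩) (fun h' => hnot (by rw [h']; exact ⟨_, rfl⟩))
      (fun h' => hnot (by rw [h']; exact ⟨_, rfl⟩))
    rwa [h, concatF_concatLeft, eq_comm] at hfix
  have hστ : σ = concatF n n' α τ := by
    funext x
    rcases concatLeft_or_concatRight x with ⟨x, rfl⟩ | ⟨y, rfl⟩
    · rw [hleft, concatF_concatLeft]
    · rw [← hτ, concatF_concatRight]
  refine ⟨⟨τ, hσ.of_semiconj concatRight_strictMono hτ⟩,
    concatF_right_injective α ?_, hστ⟩
  rw [← tlAt_concatF, ← hστ, h]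

end Preimage

theorem stmt3 (n n' : ℕ) (α : NCM n) (β γ : NCM n') (i : ℕ)
    (hi1 : 2 ≤ i) (hi2 : i ≤ 2*n' - 2) (h : UpArrow n' β.1 γ.1 i)
    (σ : NCM (n + n')) :
    TLe (2*(n+n')) (2*n + i) σ.1 = concatF n n' α.1 β.1 ↔
      ∃ τ : NCM n', TLe (2*n') i τ.1 = β.1 ∧ σ.1 = concatF n n' α.1 τ.1 := by
  have hi : 1 ≤ i := by omega
  have hi' : i < 2 * n' := by omega
  simp only [TLe_two_mul_add hi hi', TLe_eq_tlAt hi hi']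
  constructor
  · exact exists_eq_concatF_of_tlAt_eq hi hi' σ.2 β.2 γ.2 h
  · rintro ⟨τ, hτ, hστ⟩
    rw [hστ, tlAt_concatF, hτ]
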